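/- With the notation of the single-channel regularization (A ∈ ℂ^n nonzero, Γ ∈ ℂ^n, G_i = Γ_i A_i, weighted means ⟨·⟩, V(Γ) = √(⟨J⟩² + Var(J) + Var(S)) > 0, λ = ‖A‖²(⟨J⟩ + V(Γ))), the positive part χ⁺ = λ|+⟩⟨+| of χ = |A⟩⟨G| + |G⟩⟨A| has entries χ⁺_{ij} = (A_i A_j*)/(2V(Γ)) · [Γ_i Γ_j* + ⟨J²⟩ + ⟨S²⟩ + (V(Γ) + i⟨S⟩)Γ_i + (V(Γ) − i⟨S⟩)Γ_j*]. -/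

import Mathlib

/-!
Put `w := G - i⟨S⟩A`, i.e. `w_i = (Γ_i - i⟨S⟩) A_i`. Shifting `G` by an imaginary multiple of `A`
does not change `χ`, so `χ = |A⟩⟨w| + |w⟩⟨A|`, and now `⟨A|w⟩ = ‖A‖²⟨J⟩` is real while
`⟨w|w⟩ = ‖A‖²(⟨J²⟩ + Var S) = V²‖A‖²`. These two relations make
`M = V⁻¹|w⟩⟨w| + V|A⟩⟨A|` a positive semidefinite square root of `χ² = χᴴχ`, so `M = |χ|` and
`χ⁺ = (χ + M)/2 = (2V)⁻¹ |w + VA⟩⟨w + VA|`. Expanding the entries and using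
`V² + ⟨S⟩² = ⟨J²⟩ + ⟨S²⟩` gives the formula.
-/

open Matrix
open scoped ComplexOrder

/-- The matrix `χ = |A⟩⟨G| + |G⟩⟨A|`. -/
noncomputable def dyadSum {n : ℕ} (A G : Fin n → ℂ) : Matrix (Fin n) (Fin n) ℂ :=
  Matrix.of fun i j => A i * star (G j) + G i * star (A j)

/-- The positive part of a matrix χ, i.e. `(χ + √(χᴴχ))/2`. -/
noncomputable def matPosPart {n : ℕ} (χ : Matrix (Fin n) (Fin n) ℂ) : Matrix (Fin n) (Fin n) ℂ :=
  (2 : ℂ)⁻¹ • (χ + ((Matrix.posSemidef_conjTranspose_mul_self χ).1.eigenvectorUnitary.1 *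
    diagonal ((↑) ∘ (√·) ∘ (Matrix.posSemidef_conjTranspose_mul_self χ).1.eigenvalues) *
    (star (Matrix.posSemidef_conjTranspose_mul_self χ).1.eigenvectorUnitary : Matrix (Fin n) (Fin n) ℂ)))

/-- `‖A‖² = ∑ |A_i|²`. -/
noncomputable def nrmSq {n : ℕ} (A : Fin n → ℂ) : ℝ := ∑ i, Complex.normSq (A i)

/-- Weighted mean `⟨x⟩ = (∑ x_i |A_i|²)/(∑ |A_i|²)`. -/
noncomputable def wmean {n : ℕ} (A : Fin n → ℂ) (x : Fin n → ℝ) : ℝ :=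
  (∑ i, x i * Complex.normSq (A i)) / nrmSq A

/-- `Var(x) = ⟨x²⟩ − ⟨x⟩²`. -/
noncomputable def wvar {n : ℕ} (A : Fin n → ℂ) (x : Fin n → ℝ) : ℝ :=
  wmean A (fun i => x i ^ 2) - (wmean A x) ^ 2

/-- `V(Γ) = √(⟨J⟩² + Var(J) + Var(S))`. -/
noncomputable def vGamma {n : ℕ} (A Γ : Fin n → ℂ) : ℝ :=
  Real.sqrt ((wmean A fun i => (Γ i).re) ^ 2 +
    wvar A (fun i => (Γ i).re) + wvar A (fun i => (Γ i).im))


open scoped MatrixOrder in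
theorem matPosPart_eq_of_mul_self_eq {n : ℕ} {χ M : Matrix (Fin n) (Fin n) ℂ} (hM : M.PosSemidef)
    (hMχ : M * M = χᴴ * χ) : matPosPart χ = (2 : ℂ)⁻¹ • (χ + M) := by
  have hχ := posSemidef_conjTranspose_mul_self χ
  have hsqrt : cfc Real.sqrt (χᴴ * χ) = M := by
    rw [← cfcₙ_eq_cfc, ← CFC.sqrt_eq_real_sqrt _ hχ.nonneg]
    exact CFC.sqrt_unique hMχ hM.nonneg
  rw [hχ.1.cfc_eq, IsHermitian.cfc, Unitary.conjStarAlgAut_apply] at hsqrt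
  exact congrArg (fun X => (2 : ℂ)⁻¹ • (χ + X)) hsqrt

open Complex

section RankTwo

variable {ι : Type*}

theorem star_mul_dotProduct_mul [Fintype ι] (u v a : ι → ℂ) :
    star (u * a) ⬝ᵥ (v * a) = ∑ i, star (u i) * v i * (normSq (a i) : ℂ) := by
  refine Finset.sum_congr rfl fun i _ => ?_
  simp only [Pi.star_apply, Pi.mul_apply, star_mul', normSq_eq_conj_mul_self, star_def]
  ring

theorem isHermitian_vecMulVec_add (a w : ι → ℂ) :
    (vecMulVec a (star w) + vecMulVec w (star a)).IsHermitian := by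
  simp [IsHermitian, conjTranspose_vecMulVec, add_comm]

theorem posSemidef_smul_vecMulVec_add [Finite ι] {r t : ℝ} (hr : 0 ≤ r) (ht : 0 ≤ t)
    (w a : ι → ℂ) : (r • vecMulVec w (star w) + t • vecMulVec a (star a)).PosSemidef :=
  ((posSemidef_vecMulVec_self_star w).smul hr).add ((posSemidef_vecMulVec_self_star a).smul ht)

theorem rankTwo_mul_self_eq [Fintype ι] (a w : ι → ℂ) {V : ℝ} (hV : V ≠ 0)
    (hww : star w ⬝ᵥ w = (V : ℂ) ^ 2 * (star a ⬝ᵥ a)) (hwa : star w ⬝ᵥ a = star a ⬝ᵥ w) :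
    (V⁻¹ • vecMulVec w (star w) + V • vecMulVec a (star a)) *
        (V⁻¹ • vecMulVec w (star w) + V • vecMulVec a (star a)) =
      (vecMulVec a (star w) + vecMulVec w (star a)) *
        (vecMulVec a (star w) + vecMulVec w (star a)) := by
  simp only [add_mul, mul_add, smul_mul_smul, vecMulVec_mul_vecMulVec, vecMulVec_smul, hww, hwa,
    ← coe_smul]
  have hV' : (V : ℂ) ≠ 0 := by exact_mod_cast hV
  match_scalars <;> field_simp

end RankTwo

theorem dyadSum_eq_vecMulVec {n : ℕ} (A G : Fin n → ℂ) :
    dyadSum A G = vecMulVec A (star G) + vecMulVec G (star A) := rfl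

theorem dyadSum_sub_smul_self {n : ℕ} (A G : Fin n → ℂ) {c : ℂ} (hc : star c = -c) :
    dyadSum A (G - c • A) = dyadSum A G := by
  ext i j
  simp only [dyadSum, of_apply, Pi.sub_apply, Pi.smul_apply, smul_eq_mul, star_sub, star_mul', hc]
  ring

theorem matPosPart_dyadSum {n : ℕ} (a w : Fin n → ℂ) {V : ℝ} (hV : 0 < V)
    (hww : star w ⬝ᵥ w = (V : ℂ) ^ 2 * (star a ⬝ᵥ a)) (hwa : star w ⬝ᵥ a = star a ⬝ᵥ w) :
    matPosPart (dyadSum a w) = (2 * V)⁻¹ • vecMulVec (w + V • a) (star (w + V • a)) := by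
  rw [dyadSum_eq_vecMulVec,
    matPosPart_eq_of_mul_self_eq (posSemidef_smul_vecMulVec_add (inv_nonneg.2 hV.le) hV.le w a)]
  · simp only [star_add, star_smul, star_trivial, add_vecMulVec, vecMulVec_add, smul_vecMulVec,
      vecMulVec_smul]
    simp only [← coe_smul]
    have hV' : (V : ℂ) ≠ 0 := by exact_mod_cast hV.ne'
    match_scalars <;> field_simp
  · rw [(isHermitian_vecMulVec_add a w).eq]
    exact rankTwo_mul_self_eq a w hV.ne' hww hwa

section Moments

variable {n : ℕ} {A : Fin n → ℂ}

theorem nrmSq_pos (hA : A ≠ 0) : 0 < nrmSq A := by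
  obtain ⟨i, hi⟩ := Function.ne_iff.mp hA
  exact Finset.sum_pos' (fun k _ => normSq_nonneg _) ⟨i, Finset.mem_univ i, normSq_pos.mpr hi⟩

theorem sum_mul_normSq_eq (hA : A ≠ 0) (x : Fin n → ℝ) :
    ∑ i, x i * normSq (A i) = wmean A x * nrmSq A := by
  rw [wmean, div_mul_cancel₀ _ (nrmSq_pos hA).ne']

theorem wmean_const (hA : A ≠ 0) (c : ℝ) : wmean A (fun _ => c) = c := by
  rw [wmean, ← Finset.mul_sum]
  exact mul_div_cancel_right₀ _ (nrmSq_pos hA).ne'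

theorem vGamma_sq {Γ : Fin n → ℂ} (hV : 0 < vGamma A Γ) :
    vGamma A Γ ^ 2 = wmean A (fun i => (Γ i).re ^ 2) + wmean A (fun i => (Γ i).im ^ 2) -
      wmean A (fun i => (Γ i).im) ^ 2 := by
  rw [vGamma, Real.sq_sqrt (Real.sqrt_pos.mp hV).le, wvar, wvar]
  ring

end Moments

section Centred

variable {n : ℕ} (A Γ : Fin n → ℂ)

noncomputable def centredG : Fin n → ℂ :=
  (fun i => Γ i - I * wmean A (fun i => (Γ i).im)) * A

theorem dyadSum_centredG {G : Fin n → ℂ} (hG : ∀ i, G i = Γ i * A i) :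
    dyadSum A (centredG A Γ) = dyadSum A G := by
  have hw : centredG A Γ = G - (I * wmean A (fun i => (Γ i).im)) • A := by
    ext i
    simp only [centredG, Pi.mul_apply, Pi.sub_apply, Pi.smul_apply, smul_eq_mul, hG i]
    ring
  rw [hw, dyadSum_sub_smul_self]
  simp

theorem star_dotProduct_centredG (hA : A ≠ 0) :
    star A ⬝ᵥ centredG A Γ = ((wmean A (fun i => (Γ i).re) * nrmSq A : ℝ) : ℂ) := by
  have h := star_mul_dotProduct_mul 1 (fun i => Γ i - I * wmean A (fun i => (Γ i).im)) A
  simp only [one_mul, Pi.one_apply, star_one] at h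
  rw [centredG, h]
  apply Complex.ext
  · simp [re_sum, sum_mul_normSq_eq hA]
  · simp [im_sum, sub_mul, Finset.sum_sub_distrib, sum_mul_normSq_eq hA, wmean_const hA]

theorem star_centredG_dotProduct (hA : A ≠ 0) :
    star (centredG A Γ) ⬝ᵥ A = star A ⬝ᵥ centredG A Γ := by
  rw [← star_star (star A ⬝ᵥ _), star_dotProduct, star_star, star_dotProduct_centredG A Γ hA,
    star_def, conj_ofReal]

theorem star_centredG_dotProduct_self (hA : A ≠ 0) (hV : 0 < vGamma A Γ) :
    star (centredG A Γ) ⬝ᵥ centredG A Γ = (vGamma A Γ : ℂ) ^ 2 * (star A ⬝ᵥ A) := by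
  have hAA := star_mul_dotProduct_mul 1 1 A
  simp only [one_mul, Pi.one_apply, star_one] at hAA
  rw [centredG, star_mul_dotProduct_mul, hAA]
  simp only [star_def, ← normSq_eq_conj_mul_self]
  norm_cast
  have hδ : ∀ i, normSq (Γ i - I * wmean A (fun i => (Γ i).im)) =
      (Γ i).re ^ 2 + (Γ i).im ^ 2 - 2 * wmean A (fun i => (Γ i).im) * (Γ i).im +
        wmean A (fun i => (Γ i).im) ^ 2 := by
    intro i
    simp only [normSq_apply, sub_re, sub_im, mul_re, mul_im, I_re, I_im, ofReal_re, ofReal_im]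
    ring
  simp only [hδ, add_mul, sub_mul, Finset.sum_add_distrib, Finset.sum_sub_distrib, mul_assoc,
    ← Finset.mul_sum, sum_mul_normSq_eq hA]
  rw [wmean_const hA, vGamma_sq hV, ← nrmSq]
  ring

end Centred

theorem stmt_12_general {n : ℕ} (A Γ G : Fin n → ℂ) (hA : A ≠ 0)
    (hG : ∀ i, G i = Γ i * A i)
    (hV : 0 < vGamma A Γ) :
    ∀ i j, matPosPart (dyadSum A G) i j =
      (A i * star (A j)) / (2 * (vGamma A Γ : ℂ)) *
        (Γ i * star (Γ j) + ((wmean A fun i => (Γ i).re ^ 2 : ℝ) : ℂ) +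
          ((wmean A fun i => (Γ i).im ^ 2 : ℝ) : ℂ) +
          ((vGamma A Γ : ℂ) + Complex.I * ((wmean A fun i => (Γ i).im : ℝ) : ℂ)) * Γ i +
          ((vGamma A Γ : ℂ) - Complex.I * ((wmean A fun i => (Γ i).im : ℝ) : ℂ)) * star (Γ j)) := by
  have hV2 : ((vGamma A Γ : ℝ) : ℂ) ^ 2 = ((wmean A fun i => (Γ i).re ^ 2 : ℝ) : ℂ) +
      ((wmean A fun i => (Γ i).im ^ 2 : ℝ) : ℂ) - ((wmean A fun i => (Γ i).im : ℝ) : ℂ) ^ 2 := by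
    exact_mod_cast vGamma_sq hV
  have hV0 : (vGamma A Γ : ℂ) ≠ 0 := by exact_mod_cast hV.ne'
  intro i j
  rw [← dyadSum_centredG A Γ hG, matPosPart_dyadSum A _ hV
    (star_centredG_dotProduct_self A Γ hA hV) (star_centredG_dotProduct A Γ hA)]
  simp only [← coe_smul, Matrix.smul_apply, vecMulVec_apply, Pi.add_apply, Pi.star_apply,
    centredG, Pi.mul_apply, Pi.smul_apply, star_add, star_mul', smul_eq_mul, star_sub, star_def,
    conj_I, conj_ofReal]
  push_cast
  field_simp
  linear_combination (A i * starRingEnd ℂ (A j)) * hV2 -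
    (A i * starRingEnd ℂ (A j) * (wmean A fun i => (Γ i).im : ℂ) ^ 2) * I_sq

/-- Entrywise formula for the regularized Kossakowski matrix `χ⁺` in the
single-noise-channel case. -/
theorem stmt_12 {n : ℕ} (A Γ G : Fin n → ℂ) (hA : A ≠ 0)
    (hG : ∀ i, G i = Γ i * A i) (hAG : LinearIndependent ℂ ![A, G])
    (hV : 0 < vGamma A Γ) :
    ∀ i j, matPosPart (dyadSum A G) i j =
      (A i * star (A j)) / (2 * (vGamma A Γ : ℂ)) *
        (Γ i * star (Γ j) + ((wmean A fun i => (Γ i).re ^ 2 : ℝ) : ℂ) +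
          ((wmean A fun i => (Γ i).im ^ 2 : ℝ) : ℂ) +
          ((vGamma A Γ : ℂ) + Complex.I * ((wmean A fun i => (Γ i).im : ℝ) : ℂ)) * Γ i +
          ((vGamma A Γ : ℂ) - Complex.I * ((wmean A fun i => (Γ i).im : ℝ) : ℂ)) * star (Γ j)) :=
  stmt_12_general A Γ G hA hG hV
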